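/- arXiv:2412.07075 — 10 statements merged into one kernel-verified Lean document; each statement's English description precedes it below -/
import Mathlib

section
/- In the conformal control iteration, if the integrator has saturated from above at time t, i.e. E_t ≥ c·h(t), then the next round is covered: err_{t+1} = 0 (that is, s_{t+1} ≤ q_{t+1}). -/
open Finset

/-- Conformal control (PID) iteration context:
`err t = 1{s t > q t}`, integrator `E t = ∑_{i=1}^t (err i - α)` with `E 0 = 0`,
and iterates `q t = q̂ t + r (t-1) (E (t-1))` for `t ≥ 1`. -/
theorem conformal_stmt_0
    (α M : ℝ) (hα0 : 0 < α) (hα1 : α < 1) (hM : 0 ≤ M)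
    (s qhat : ℕ → ℝ)
    (hs : ∀ t, 1 ≤ t → |s t| ≤ M) (hqhat : ∀ t, 1 ≤ t → |qhat t| ≤ M)
    (h : ℕ → ℝ) (hh0 : ∀ t, 0 ≤ h t) (hhmono : Monotone h)
    (c b : ℝ) (hc : 0 ≤ c) (hb : 2 * M < b)
    (r : ℕ → ℝ → ℝ)
    (hrub : ∀ t x, c * h t ≤ x → b ≤ r t x)
    (hrlb : ∀ t x, x ≤ -(c * h t) → r t x ≤ -b)
    (err E q : ℕ → ℝ)
    (herr : ∀ t, 1 ≤ t → err t = if q t < s t then 1 else 0)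
    (hE0 : E 0 = 0)
    (hE : ∀ t, 1 ≤ t → E t = ∑ i ∈ Finset.Icc 1 t, (err i - α))
    (hq : ∀ t, 1 ≤ t → q t = qhat t + r (t - 1) (E (t - 1)))
    (t : ℕ) (hsat : c * h t ≤ E t) :
    err (t + 1) = 0 ∧ s (t + 1) ≤ q (t + 1) := by
  have h1 : 1 ≤ t + 1 := Nat.le_add_left 1 t
  have hqe := hq (t+1) h1
  simp only [Nat.add_sub_cancel] at hqe
  have hr : b ≤ r t (E t) := hrub t (E t) hsat
  have hsle : s (t+1) ≤ q (t+1) := by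
    have h2 := abs_le.1 (hs (t+1) h1)
    have h3 := abs_le.1 (hqhat (t+1) h1)
    rw [hqe]; linarith
  refine ⟨?_, hsle⟩
  rw [herr (t+1) h1, if_neg (not_lt.2 hsle)]
end

section
/- In the conformal control iteration, if the integrator has saturated from below at time t, i.e. E_t ≤ −c·h(t), then the next round is missed: err_{t+1} = 1 (that is, s_{t+1} > q_{t+1}). -/
open Finset

/-- Conformal control (PID) iteration context:
`err t = 1{s t > q t}`, integrator `E t = ∑_{i=1}^t (err i - α)` with `E 0 = 0`,
and iterates `q t = q̂ t + r (t-1) (E (t-1))` for `t ≥ 1`. -/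
theorem conformal_stmt_1
    (α M : ℝ) (hα0 : 0 < α) (hα1 : α < 1) (hM : 0 ≤ M)
    (s qhat : ℕ → ℝ)
    (hs : ∀ t, 1 ≤ t → |s t| ≤ M) (hqhat : ∀ t, 1 ≤ t → |qhat t| ≤ M)
    (h : ℕ → ℝ) (hh0 : ∀ t, 0 ≤ h t) (hhmono : Monotone h)
    (c b : ℝ) (hc : 0 ≤ c) (hb : 2 * M < b)
    (r : ℕ → ℝ → ℝ)
    (hrub : ∀ t x, c * h t ≤ x → b ≤ r t x)
    (hrlb : ∀ t x, x ≤ -(c * h t) → r t x ≤ -b)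
    (err E q : ℕ → ℝ)
    (herr : ∀ t, 1 ≤ t → err t = if q t < s t then 1 else 0)
    (hE0 : E 0 = 0)
    (hE : ∀ t, 1 ≤ t → E t = ∑ i ∈ Finset.Icc 1 t, (err i - α))
    (hq : ∀ t, 1 ≤ t → q t = qhat t + r (t - 1) (E (t - 1)))
    (t : ℕ) (hsat : E t ≤ -(c * h t)) :
    err (t + 1) = 1 ∧ q (t + 1) < s (t + 1) := by
  have h1 : q (t + 1) = qhat (t + 1) + r t (E t) := by
    have := hq (t + 1) (Nat.le_add_left 1 t)
    simpa using this
  have hr : r t (E t) ≤ -b := hrlb t (E t) hsat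
  have hq1 := hqhat (t + 1) (Nat.le_add_left 1 t)
  have hs1 := hs (t + 1) (Nat.le_add_left 1 t)
  have hlt : q (t + 1) < s (t + 1) := by
    rw [h1]
    have h2 : qhat (t + 1) ≤ M := (abs_le.mp hq1).2
    have h3 : -M ≤ s (t + 1) := (abs_le.mp hs1).1
    nlinarith
  refine ⟨?_, hlt⟩
  rw [herr (t + 1) (Nat.le_add_left 1 t), if_pos hlt]
end

section
/- In the conformal control iteration, the integrator is bounded above for all times: E_T ≤ c·h(T) + 1 for every T ≥ 0. -/
open Finset

/-- Conformal control (PID) iteration context: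
`err t = 1{s t > q t}`, integrator `E t = ∑_{i=1}^t (err i - α)` with `E 0 = 0`,
and iterates `q t = q̂ t + r (t-1) (E (t-1))` for `t ≥ 1`. -/
theorem conformal_stmt_2
    (α M : ℝ) (hα0 : 0 < α) (hα1 : α < 1) (hM : 0 ≤ M)
    (s qhat : ℕ → ℝ)
    (hs : ∀ t, 1 ≤ t → |s t| ≤ M) (hqhat : ∀ t, 1 ≤ t → |qhat t| ≤ M)
    (h : ℕ → ℝ) (hh0 : ∀ t, 0 ≤ h t) (hhmono : Monotone h)
    (c b : ℝ) (hc : 0 ≤ c) (hb : 2 * M < b)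
    (r : ℕ → ℝ → ℝ)
    (hrub : ∀ t x, c * h t ≤ x → b ≤ r t x)
    (hrlb : ∀ t x, x ≤ -(c * h t) → r t x ≤ -b)
    (err E q : ℕ → ℝ)
    (herr : ∀ t, 1 ≤ t → err t = if q t < s t then 1 else 0)
    (hE0 : E 0 = 0)
    (hE : ∀ t, 1 ≤ t → E t = ∑ i ∈ Finset.Icc 1 t, (err i - α))
    (hq : ∀ t, 1 ≤ t → q t = qhat t + r (t - 1) (E (t - 1)))
    (T : ℕ) :
    E T ≤ c * h T + 1 := by

  induction T with
  | zero =>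
    have : (0:ℝ) ≤ c * h 0 := mul_nonneg hc (hh0 0)
    rw [hE0]; linarith
  | succ t ih =>
    have hstep : E (t+1) = E t + (err (t+1) - α) := by
      rcases Nat.eq_zero_or_pos t with ht0 | ht0
      · subst ht0
        rw [hE 1 le_rfl, hE0]
        simp
      · rw [hE (t+1) (by omega), hE t ht0,
          Finset.sum_Icc_succ_top (by omega : 1 ≤ t+1)]
    have hmono' : c * h t ≤ c * h (t+1) :=
      mul_le_mul_of_nonneg_left (hhmono (Nat.le_succ t)) hc
    rcases le_or_gt (E t) (c * h t) with hle | hgt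
    · -- err ≤ 1
      have herr1 : err (t+1) ≤ 1 := by
        rw [herr (t+1) (by omega)]; split <;> norm_num
      linarith
    · -- saturation: err (t+1) = 0
      have hr : b ≤ r t (E t) := hrub t (E t) hgt.le
      have hq' : q (t+1) = qhat (t+1) + r t (E t) := by
        have := hq (t+1) (by omega); simpa using this
      have hqhat' := abs_le.mp (hqhat (t+1) (by omega))
      have hs' := abs_le.mp (hs (t+1) (by omega))
      have hqs : ¬ q (t+1) < s (t+1) := by
        rw [hq']; push_neg; linarith [hqhat'.1, hs'.2]
      have herr0 : err (t+1) = 0 := by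
        rw [herr (t+1) (by omega), if_neg hqs]
      linarith
end

section
/- In the conformal control iteration, the integrator is bounded below for all times: E_T ≥ −(c·h(T) + 1) for every T ≥ 0. -/
open Finset

/-- Conformal control (PID) iteration context:
`err t = 1{s t > q t}`, integrator `E t = ∑_{i=1}^t (err i - α)` with `E 0 = 0`,
and iterates `q t = q̂ t + r (t-1) (E (t-1))` for `t ≥ 1`. -/
theorem conformal_stmt_3
    (α M : ℝ) (hα0 : 0 < α) (hα1 : α < 1) (hM : 0 ≤ M)
    (s qhat : ℕ → ℝ)
    (hs : ∀ t, 1 ≤ t → |s t| ≤ M) (hqhat : ∀ t, 1 ≤ t → |qhat t| ≤ M)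
    (h : ℕ → ℝ) (hh0 : ∀ t, 0 ≤ h t) (hhmono : Monotone h)
    (c b : ℝ) (hc : 0 ≤ c) (hb : 2 * M < b)
    (r : ℕ → ℝ → ℝ)
    (hrub : ∀ t x, c * h t ≤ x → b ≤ r t x)
    (hrlb : ∀ t x, x ≤ -(c * h t) → r t x ≤ -b)
    (err E q : ℕ → ℝ)
    (herr : ∀ t, 1 ≤ t → err t = if q t < s t then 1 else 0)
    (hE0 : E 0 = 0)
    (hE : ∀ t, 1 ≤ t → E t = ∑ i ∈ Finset.Icc 1 t, (err i - α))
    (hq : ∀ t, 1 ≤ t → q t = qhat t + r (t - 1) (E (t - 1)))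
    (T : ℕ) :
    -(c * h T + 1) ≤ E T := by
  have hstep : ∀ t : ℕ, E (t+1) = E t + (err (t+1) - α) := by
    intro t
    rcases Nat.eq_zero_or_pos t with h0 | hpos
    · subst h0
      rw [hE 1 le_rfl, hE0]
      simp
    · rw [hE (t+1) (by omega), hE t hpos, Finset.sum_Icc_succ_top (by omega)]
  induction T with
  | zero =>
    rw [hE0]
    have := mul_nonneg hc (hh0 0)
    linarith
  | succ t ih =>
    have hmon : c * h t ≤ c * h (t+1) :=
      mul_le_mul_of_nonneg_left (hhmono (Nat.le_succ t)) hc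
    by_cases hcase : -(c * h t) ≤ E t
    · have herr01 : 0 ≤ err (t+1) := by
        rw [herr (t+1) (by omega)]
        split <;> norm_num
      rw [hstep t]
      linarith
    · push_neg at hcase
      have hr : r t (E t) ≤ -b := hrlb t (E t) hcase.le
      have hq1 : q (t+1) = qhat (t+1) + r t (E t) := by
        have := hq (t+1) (by omega)
        simpa using this
      have hs1 := abs_le.mp (hs (t+1) (by omega))
      have hqh1 := abs_le.mp (hqhat (t+1) (by omega))
      have hlt : q (t+1) < s (t+1) := by
        rw [hq1]; linarith [hs1.1, hqh1.2]
      have herr1 : err (t+1) = 1 := by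
        rw [herr (t+1) (by omega)]; simp [hlt]
      rw [hstep t, herr1]
      linarith
end

section
/- In the conformal control iteration, the empirical miscoverage satisfies the explicit finite-time bound |(1/T)·Σ_{t=1}^T err_t − α| ≤ (c·h(T) + 1)/T for every T ≥ 1. -/
open Finset

/-- Conformal control (PID) iteration context:
`err t = 1{s t > q t}`, integrator `E t = ∑_{i=1}^t (err i - α)` with `E 0 = 0`,
and iterates `q t = q̂ t + r (t-1) (E (t-1))` for `t ≥ 1`. -/
theorem conformal_stmt_4
    (α M : ℝ) (hα0 : 0 < α) (hα1 : α < 1) (hM : 0 ≤ M)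
    (s qhat : ℕ → ℝ)
    (hs : ∀ t, 1 ≤ t → |s t| ≤ M) (hqhat : ∀ t, 1 ≤ t → |qhat t| ≤ M)
    (h : ℕ → ℝ) (hh0 : ∀ t, 0 ≤ h t) (hhmono : Monotone h)
    (c b : ℝ) (hc : 0 ≤ c) (hb : 2 * M < b)
    (r : ℕ → ℝ → ℝ)
    (hrub : ∀ t x, c * h t ≤ x → b ≤ r t x)
    (hrlb : ∀ t x, x ≤ -(c * h t) → r t x ≤ -b)
    (err E q : ℕ → ℝ)
    (herr : ∀ t, 1 ≤ t → err t = if q t < s t then 1 else 0)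
    (hE0 : E 0 = 0)
    (hE : ∀ t, 1 ≤ t → E t = ∑ i ∈ Finset.Icc 1 t, (err i - α))
    (hq : ∀ t, 1 ≤ t → q t = qhat t + r (t - 1) (E (t - 1)))
    (T : ℕ) (hT : 1 ≤ T) :
    |(1 / (T : ℝ)) * ∑ t ∈ Finset.Icc 1 T, err t - α| ≤ (c * h T + 1) / (T : ℝ) := by
  have hrec : ∀ n : ℕ, E (n + 1) = E n + (err (n + 1) - α) := by
    intro n
    rcases Nat.eq_zero_or_pos n with rfl | hn
    · rw [hE 1 le_rfl, hE0]
      simp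
    · rw [hE (n + 1) (by omega), hE n hn, Finset.sum_Icc_succ_top (by omega)]
  have herrb : ∀ t, 1 ≤ t → 0 ≤ err t ∧ err t ≤ 1 := by
    intro t ht
    rw [herr t ht]
    split <;> norm_num
  have key : ∀ n : ℕ, |E n| ≤ c * h n + 1 := by
    intro n
    induction n with
    | zero =>
      rw [hE0, abs_zero]
      have := mul_nonneg hc (hh0 0); linarith
    | succ n ih =>
      have hmono : c * h n ≤ c * h (n + 1) :=
        mul_le_mul_of_nonneg_left (hhmono (Nat.le_succ n)) hc
      have hqn : q (n + 1) = qhat (n + 1) + r n (E n) := by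
        rw [hq (n + 1) (by omega)]; simp
      have habsE := abs_le.mp ih
      have hb0 := herrb (n + 1) (by omega)
      rw [abs_le]
      constructor
      · by_cases hcase : E n ≤ -(c * h n)
        · have hr := hrlb n (E n) hcase
          have hqhat1 := abs_le.mp (hqhat (n + 1) (by omega))
          have hs1 := abs_le.mp (hs (n + 1) (by omega))
          have hlt : q (n + 1) < s (n + 1) := by
            rw [hqn]; linarith
          have he1 : err (n + 1) = 1 := by rw [herr (n + 1) (by omega), if_pos hlt]
          rw [hrec, he1]
          nlinarith [mul_nonneg hc (hh0 n)]
        · push_neg at hcase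
          rw [hrec]
          nlinarith
      · by_cases hcase : c * h n ≤ E n
        · have hr := hrub n (E n) hcase
          have hqhat1 := abs_le.mp (hqhat (n + 1) (by omega))
          have hs1 := abs_le.mp (hs (n + 1) (by omega))
          have hlt : ¬ q (n + 1) < s (n + 1) := by
            rw [hqn]; push_neg; linarith
          have he0 : err (n + 1) = 0 := by rw [herr (n + 1) (by omega), if_neg hlt]
          rw [hrec, he0]
          linarith
        · push_neg at hcase
          rw [hrec]
          nlinarith
  have hET : E T = (∑ t ∈ Finset.Icc 1 T, err t) - T * α := by
    rw [hE T hT, Finset.sum_sub_distrib]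
    simp [Nat.card_Icc]
  have hTpos : (0 : ℝ) < T := by exact_mod_cast hT
  have hmain : |(∑ t ∈ Finset.Icc 1 T, err t) - T * α| ≤ c * h T + 1 := by
    rw [← hET]; exact key T
  have heq : (1 / (T:ℝ)) * (∑ t ∈ Finset.Icc 1 T, err t) - α
      = ((∑ t ∈ Finset.Icc 1 T, err t) - T * α) / T := by
    field_simp
  rw [heq, abs_div, abs_of_pos hTpos]
  gcongr
end

section
/- The conformal control iteration achieves long-run coverage: if in addition h is sublinear, i.e. h(T)/T → 0 as T → ∞, then the empirical miscoverage converges to the target level, (1/T)·Σ_{t=1}^T err_t → α as T → ∞, for any choice of the quantile forecaster q̂ and any saturation functions r_t satisfying the stated conditions. -/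
/-!
The integrator `E` is self-correcting: once `E t ≥ c h t` the forecast is pushed above the
score, so no miscoverage occurs and `E` decreases; once `E t ≤ -c h t` the forecast is pushed
below the score and `E` increases. Since each step moves `E` by at most one, `|E t| ≤ c h t + 1`
for all `t`, and sublinearity of `h` makes `E T / T = (1/T) ∑ err - α` tend to zero.
-/

open Finset Filter Topology

theorem abs_le_of_mean_reverting {E B : ℕ → ℝ} {δ : ℝ} (hE0 : E 0 = 0) (hB0 : 0 ≤ B 0)
    (hB : Monotone B) (hδ : 0 ≤ δ) (hstep : ∀ t, |E (t + 1) - E t| ≤ δ)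
    (hdown : ∀ t, B t ≤ E t → E (t + 1) ≤ E t) (hup : ∀ t, E t ≤ -B t → E t ≤ E (t + 1)) :
    ∀ t, |E t| ≤ B t + δ := by
  intro t
  induction t with
  | zero => simpa [hE0] using add_nonneg hB0 hδ
  | succ n ih =>
    have hBn : B n ≤ B (n + 1) := hB n.le_succ
    have hstepn := abs_le.mp (hstep n)
    rw [abs_le] at ih ⊢
    constructor
    · by_cases hlow : E n ≤ -B n
      · linarith [hup n hlow]
      · linarith
    · by_cases hhigh : B n ≤ E n
      · linarith [hdown n hhigh]
      · linarith

theorem add_lt_of_abs_le_of_le_neg {M b x y r : ℝ} (hb : 2 * M < b) (hx : |x| ≤ M)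
    (hy : |y| ≤ M) (hr : r ≤ -b) : x + r < y := by
  linarith [abs_le.mp hx, abs_le.mp hy]

theorem lt_add_of_abs_le_of_le {M b x y r : ℝ} (hb : 2 * M < b) (hx : |x| ≤ M)
    (hy : |y| ≤ M) (hr : b ≤ r) : y < x + r := by
  linarith [abs_le.mp hx, abs_le.mp hy]

theorem tendsto_div_natCast_zero_of_abs_le {x h : ℕ → ℝ} (c d : ℝ)
    (hx : ∀ T, |x T| ≤ c * h T + d) (hh : Tendsto (fun T : ℕ => h T / T) atTop (𝓝 0)) :
    Tendsto (fun T : ℕ => x T / T) atTop (𝓝 0) := by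
  have hbound : Tendsto (fun T : ℕ => c * (h T / T) + d * (1 / T)) atTop (𝓝 0) := by
    simpa using (hh.const_mul c).add (tendsto_one_div_atTop_nhds_zero_nat.const_mul d)
  refine squeeze_zero_norm' ?_ hbound
  filter_upwards [eventually_gt_atTop 0] with T hT
  have hT' : (0 : ℝ) < T := by exact_mod_cast hT
  calc ‖x T / T‖ = |x T| / T := by rw [Real.norm_eq_abs, abs_div, Nat.abs_cast]
    _ ≤ (c * h T + d) / T := by gcongr; exact hx T
    _ = c * (h T / T) + d * (1 / T) := by ring

theorem tendsto_average_of_tendsto_sum_sub_div {f : ℕ → ℝ} {α : ℝ}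
    (hf : Tendsto (fun T : ℕ => (∑ i ∈ Icc 1 T, (f i - α)) / T) atTop (𝓝 0)) :
    Tendsto (fun T : ℕ => (1 / (T : ℝ)) * ∑ i ∈ Icc 1 T, f i) atTop (𝓝 α) := by
  refine (zero_add α ▸ hf.add_const α).congr' ?_
  filter_upwards [eventually_gt_atTop 0] with T hT
  have hT' : (T : ℝ) ≠ 0 := by exact_mod_cast hT.ne'
  rw [sum_sub_distrib, sum_const, Nat.card_Icc, Nat.add_sub_cancel, nsmul_eq_mul]
  field_simp
  ring

theorem conformal_stmt_5_general
    (α M : ℝ) (hα0 : 0 < α) (hα1 : α < 1)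
    (s qhat : ℕ → ℝ)
    (hs : ∀ t, 1 ≤ t → |s t| ≤ M) (hqhat : ∀ t, 1 ≤ t → |qhat t| ≤ M)
    (h : ℕ → ℝ) (hh0 : ∀ t, 0 ≤ h t) (hhmono : Monotone h)
    (c b : ℝ) (hc : 0 ≤ c) (hb : 2 * M < b)
    (r : ℕ → ℝ → ℝ)
    (hrub : ∀ t x, c * h t ≤ x → b ≤ r t x)
    (hrlb : ∀ t x, x ≤ -(c * h t) → r t x ≤ -b)
    (err E q : ℕ → ℝ)
    (herr : ∀ t, 1 ≤ t → err t = if q t < s t then 1 else 0)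
    (hE0 : E 0 = 0)
    (hE : ∀ t, 1 ≤ t → E t = ∑ i ∈ Finset.Icc 1 t, (err i - α))
    (hq : ∀ t, 1 ≤ t → q t = qhat t + r (t - 1) (E (t - 1)))
    (hsub : Filter.Tendsto (fun T : ℕ => h T / (T : ℝ)) Filter.atTop (nhds 0)) :
    Filter.Tendsto (fun T : ℕ => (1 / (T : ℝ)) * ∑ t ∈ Finset.Icc 1 T, err t)
      Filter.atTop (nhds α) := by
  have hEsum : ∀ t, E t = ∑ i ∈ Icc 1 t, (err i - α) := by
    intro t
    rcases Nat.eq_zero_or_pos t with rfl | ht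
    · simp [hE0]
    · exact hE t ht
  have hstep : ∀ t, E (t + 1) - E t = err (t + 1) - α := by
    intro t
    rw [hEsum, hEsum, sum_Icc_succ_top (by omega)]
    ring
  have herr' : ∀ t, err (t + 1) = if qhat (t + 1) + r t (E t) < s (t + 1) then 1 else 0 := by
    intro t
    simpa [hq (t + 1) (by omega)] using herr (t + 1) (by omega)
  have hcovered : ∀ t, c * h t ≤ E t → err (t + 1) = 0 := fun t hhigh => by
    rw [herr', if_neg (lt_add_of_abs_le_of_le hb (hqhat (t + 1) (by omega))
      (hs (t + 1) (by omega)) (hrub t (E t) hhigh)).not_gt]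
  have hmissed : ∀ t, E t ≤ -(c * h t) → err (t + 1) = 1 := fun t hlow => by
    rw [herr', if_pos (add_lt_of_abs_le_of_le_neg hb (hqhat (t + 1) (by omega))
      (hs (t + 1) (by omega)) (hrlb t (E t) hlow))]
  have hbound : ∀ t, |E t| ≤ c * h t + 1 := by
    refine abs_le_of_mean_reverting hE0 (mul_nonneg hc (hh0 0)) (hhmono.const_mul hc)
      zero_le_one (fun t => ?_) (fun t hhigh => ?_) (fun t hlow => ?_)
    · rw [hstep, herr', abs_le]
      split_ifs <;> constructor <;> linarith
    · linarith [hstep t, hcovered t hhigh]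
    · linarith [hstep t, hmissed t hlow]
  refine tendsto_average_of_tendsto_sum_sub_div ?_
  simp only [← hEsum]
  exact tendsto_div_natCast_zero_of_abs_le c 1 hbound hsub

/-- Conformal control (PID) iteration context:
`err t = 1{s t > q t}`, integrator `E t = ∑_{i=1}^t (err i - α)` with `E 0 = 0`,
and iterates `q t = q̂ t + r (t-1) (E (t-1))` for `t ≥ 1`. -/
theorem conformal_stmt_5
    (α M : ℝ) (hα0 : 0 < α) (hα1 : α < 1) (hM : 0 ≤ M)
    (s qhat : ℕ → ℝ)
    (hs : ∀ t, 1 ≤ t → |s t| ≤ M) (hqhat : ∀ t, 1 ≤ t → |qhat t| ≤ M)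
    (h : ℕ → ℝ) (hh0 : ∀ t, 0 ≤ h t) (hhmono : Monotone h)
    (c b : ℝ) (hc : 0 ≤ c) (hb : 2 * M < b)
    (r : ℕ → ℝ → ℝ)
    (hrub : ∀ t x, c * h t ≤ x → b ≤ r t x)
    (hrlb : ∀ t x, x ≤ -(c * h t) → r t x ≤ -b)
    (err E q : ℕ → ℝ)
    (herr : ∀ t, 1 ≤ t → err t = if q t < s t then 1 else 0)
    (hE0 : E 0 = 0)
    (hE : ∀ t, 1 ≤ t → E t = ∑ i ∈ Finset.Icc 1 t, (err i - α))
    (hq : ∀ t, 1 ≤ t → q t = qhat t + r (t - 1) (E (t - 1)))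
    (hsub : Filter.Tendsto (fun T : ℕ => h T / (T : ℝ)) Filter.atTop (nhds 0)) :
    Filter.Tendsto (fun T : ℕ => (1 / (T : ℝ)) * ∑ t ∈ Finset.Icc 1 T, err t)
      Filter.atTop (nhds α) :=
  conformal_stmt_5_general α M hα0 hα1 s qhat hs hqhat h hh0 hhmono c b hc hb r hrub hrlb err E q
    herr hE0 hE hq hsub
end

section
/- In the adaptive conformal inference (online quantile tracking) iteration, all iterates remain bounded: q_t ∈ [−M − η, M + η] for every t ≥ 1. -/
open Finset

/-- Adaptive conformal inference (online quantile tracking):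
`err t = 1{s t > q t}` and `q (t+1) = q t + η (err t - α)`,
initialized with `q 1 ∈ [-(M+η), M+η]`. -/
theorem aci_stmt_6
    (α η M : ℝ) (hα0 : 0 < α) (hα1 : α < 1) (hη : 0 < η) (hM : 0 ≤ M)
    (s : ℕ → ℝ) (hs : ∀ t, 1 ≤ t → |s t| ≤ M)
    (err q : ℕ → ℝ)
    (herr : ∀ t, 1 ≤ t → err t = if q t < s t then 1 else 0)
    (hupd : ∀ t, 1 ≤ t → q (t + 1) = q t + η * (err t - α))
    (hq1 : q 1 ∈ Set.Icc (-(M + η)) (M + η))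
    (t : ℕ) (ht : 1 ≤ t) :
    q t ∈ Set.Icc (-(M + η)) (M + η) := by
  induction t with
  | zero => omega
  | succ n ih =>
    rcases Nat.lt_or_ge n 1 with hn | hn
    · interval_cases n
      exact hq1
    · have ihn := ih hn
      have hsn := hs n hn
      obtain ⟨hlo, hhi⟩ := ihn
      have habs := abs_le.mp hsn
      rw [hupd n hn, herr n hn]
      split_ifs with h
      · constructor
        · have : (0:ℝ) ≤ η * (1 - α) := by nlinarith
          linarith
        · nlinarith [habs.2]
      · constructor
        · nlinarith [habs.1, not_lt.mp h]
        · nlinarith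
end

section
/- The adaptive conformal inference (online quantile tracking) iteration satisfies the long-run coverage bound |(1/T)·Σ_{t=1}^T err_t − α| ≤ 2(M + η)/(η·T) for every T ≥ 1; in particular the empirical miscoverage converges to α as T → ∞. -/
/-!
The update telescopes: `η (∑_{t ≤ T} err_t - T α) = q_{T+1} - q_1`. Moreover every iterate stays in
`[-(M + η), M + η]`: a step moves `q` by at most `η`, upwards only when `q_t < s_t ≤ M` and downwards
only when `q_t ≥ s_t ≥ -M`. Hence the deviation of the empirical miscoverage from `α` is at most
`2 (M + η) / (η T)`.
-/

open Finset Filter Topology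

theorem tendsto_of_abs_sub_le_div_natCast {u : ℕ → ℝ} {l C : ℝ}
    (h : ∀ T : ℕ, 1 ≤ T → |u T - l| ≤ C / T) : Tendsto u atTop (𝓝 l) := by
  rw [tendsto_iff_dist_tendsto_zero]
  refine squeeze_zero' (Eventually.of_forall fun T => dist_nonneg) ?_
    (tendsto_const_div_atTop_nhds_zero_nat C)
  filter_upwards [eventually_ge_atTop 1] with T hT
  exact h T hT

section QuantileTracking

variable {α η : ℝ} {err q : ℕ → ℝ}

theorem mul_sum_sub_eq_of_update (hupd : ∀ t, 1 ≤ t → q (t + 1) = q t + η * (err t - α))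
    (T : ℕ) : η * (∑ t ∈ Icc 1 T, err t - T * α) = q (T + 1) - q 1 := by
  induction T with
  | zero => simp
  | succ n ih =>
    rw [sum_Icc_succ_top (by omega), hupd (n + 1) (by omega)]
    push_cast
    linear_combination ih

theorem abs_quantile_update_le {M s x : ℝ} (hα0 : 0 ≤ α) (hα1 : α ≤ 1) (hη : 0 ≤ η)
    (hs : |s| ≤ M) (hx : |x| ≤ M + η) :
    |x + η * ((if x < s then 1 else 0) - α)| ≤ M + η := by
  rw [abs_le] at *
  split_ifs with h <;> constructor <;> nlinarith

theorem abs_le_of_quantile_update {M : ℝ} {s : ℕ → ℝ} (hα0 : 0 ≤ α) (hα1 : α ≤ 1) (hη : 0 ≤ η)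
    (hs : ∀ t, 1 ≤ t → |s t| ≤ M)
    (herr : ∀ t, 1 ≤ t → err t = if q t < s t then 1 else 0)
    (hupd : ∀ t, 1 ≤ t → q (t + 1) = q t + η * (err t - α))
    (hq1 : |q 1| ≤ M + η) (t : ℕ) (ht : 1 ≤ t) : |q t| ≤ M + η := by
  induction t, ht using Nat.le_induction with
  | base => exact hq1
  | succ n hn ih =>
    rw [hupd n hn, herr n hn]
    exact abs_quantile_update_le hα0 hα1 hη (hs n hn) ih

theorem abs_avg_sub_le_of_update {B : ℝ} (hη : 0 < η)
    (hupd : ∀ t, 1 ≤ t → q (t + 1) = q t + η * (err t - α))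
    (hq : ∀ t, 1 ≤ t → |q t| ≤ B) {T : ℕ} (hT : 1 ≤ T) :
    |(1 / (T : ℝ)) * ∑ t ∈ Icc 1 T, err t - α| ≤ 2 * B / (η * T) := by
  have hTpos : (0 : ℝ) < T := by exact_mod_cast hT
  have hdev : (1 / (T : ℝ)) * ∑ t ∈ Icc 1 T, err t - α = (q (T + 1) - q 1) / (η * T) := by
    rw [← mul_sum_sub_eq_of_update hupd T]
    field_simp
  rw [hdev, abs_div, abs_of_pos (mul_pos hη hTpos)]
  gcongr
  calc |q (T + 1) - q 1| ≤ |q (T + 1)| + |q 1| := abs_sub _ _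
    _ ≤ 2 * B := by linarith [hq (T + 1) (by omega), hq 1 le_rfl]

end QuantileTracking

theorem aci_stmt_7_general
    (α η M : ℝ) (hα0 : 0 < α) (hα1 : α < 1) (hη : 0 < η)
    (s : ℕ → ℝ) (hs : ∀ t, 1 ≤ t → |s t| ≤ M)
    (err q : ℕ → ℝ)
    (herr : ∀ t, 1 ≤ t → err t = if q t < s t then 1 else 0)
    (hupd : ∀ t, 1 ≤ t → q (t + 1) = q t + η * (err t - α))
    (hq1 : q 1 ∈ Set.Icc (-(M + η)) (M + η))
    :
    (∀ T : ℕ, 1 ≤ T →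
      |(1 / (T : ℝ)) * ∑ t ∈ Finset.Icc 1 T, err t - α| ≤ 2 * (M + η) / (η * T)) ∧
    Filter.Tendsto (fun T : ℕ => (1 / (T : ℝ)) * ∑ t ∈ Finset.Icc 1 T, err t)
      Filter.atTop (nhds α) := by
  have hq := abs_le_of_quantile_update hα0.le hα1.le hη.le hs herr hupd (abs_le.mpr hq1)
  have hcoverage T (hT : 1 ≤ T) := abs_avg_sub_le_of_update hη hupd hq hT
  refine ⟨hcoverage, tendsto_of_abs_sub_le_div_natCast (C := 2 * (M + η) / η) fun T hT => ?_⟩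
  rw [div_div]
  exact hcoverage T hT

/-- Adaptive conformal inference (online quantile tracking):
`err t = 1{s t > q t}` and `q (t+1) = q t + η (err t - α)`,
initialized with `q 1 ∈ [-(M+η), M+η]`. -/
theorem aci_stmt_7
    (α η M : ℝ) (hα0 : 0 < α) (hα1 : α < 1) (hη : 0 < η) (hM : 0 ≤ M)
    (s : ℕ → ℝ) (hs : ∀ t, 1 ≤ t → |s t| ≤ M)
    (err q : ℕ → ℝ)
    (herr : ∀ t, 1 ≤ t → err t = if q t < s t then 1 else 0)
    (hupd : ∀ t, 1 ≤ t → q (t + 1) = q t + η * (err t - α))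
    (hq1 : q 1 ∈ Set.Icc (-(M + η)) (M + η))
    :
    (∀ T : ℕ, 1 ≤ T →
      |(1 / (T : ℝ)) * ∑ t ∈ Finset.Icc 1 T, err t - α| ≤ 2 * (M + η) / (η * T)) ∧
    Filter.Tendsto (fun T : ℕ => (1 / (T : ℝ)) * ∑ t ∈ Finset.Icc 1 T, err t)
      Filter.atTop (nhds α) :=
  aci_stmt_7_general α η M hα0 hα1 hη s hs err q herr hupd hq1
end

section
/- Split conformal prediction has marginal coverage at least 1 − α under exchangeability: if (S_1, …, S_{n+1}) is an exchangeable random vector in ℝ^{n+1} (its joint law is invariant under every permutation of the n + 1 coordinates), α ∈ (0,1), and k = ⌈(1 − α)(n + 1)⌉ satisfies k ≤ n, then P(S_{n+1} ≤ Q̂) ≥ 1 − α, where Q̂ is the k-th smallest value among the calibration scores S_1, …, S_n. -/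
/-!
At least `k` of the `n + 1` scores are at most the `k`-th smallest of all of them, so the events
`Aᵢ = {Sᵢ ≤ k-th smallest of (S₁, …, Sₙ₊₁)}` satisfy `k ≤ ∑ᵢ P(Aᵢ)`. Exchangeability makes all
`P(Aᵢ)` equal, hence `P(Aₙ₊₁) ≥ k / (n + 1) ≥ 1 - α`. Finally `Aₙ₊₁` is exactly the coverage event:
whether `x` is at most the `k`-th smallest value only depends on how many values lie strictly below
`x`, and adding `x` itself does not change that number.
-/

open Finset MeasureTheory

-- `k` is 1-based: `k - 1` truncates, so `k = 0` acts as `k = 1`; `k > card m` gives the junk `0`.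
noncomputable def kthSmallest (m : Multiset ℝ) (k : ℕ) : ℝ :=
  (m.sort (· ≤ ·)).getD (k - 1) 0

open scoped ENNReal

theorem List.SortedLE.lt_countP_iff {α : Type*} [Preorder α] {l : List α} (hl : l.SortedLE)
    {p : α → Prop} [DecidablePred p] (hp : IsLowerSet {x | p x}) {j : ℕ} (hj : j < l.length) :
    j < l.countP (fun x => decide (p x)) ↔ p l[j] := by
  constructor
  · intro h
    by_contra hpj
    have hdrop : (l.drop j).countP (fun x => decide (p x)) = 0 := by
      refine List.countP_eq_zero.2 fun y hy hpy => hpj ?_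
      obtain ⟨i, hi, rfl⟩ := List.mem_drop_iff_getElem.1 hy
      exact hp (hl.getElem_le_getElem_of_le (Nat.le_add_right j i)) (of_decide_eq_true hpy)
    have htake := (l.take j).countP_le_length (p := fun x => decide (p x))
    rw [← List.take_append_drop j l, List.countP_append, hdrop] at h
    simp only [List.length_take] at htake
    omega
  · intro hpj
    have htake : (l.take (j + 1)).countP (fun x => decide (p x)) = j + 1 := by
      rw [List.countP_eq_length.2, List.length_take]
      · omega
      intro y hy
      obtain ⟨i, hi, rfl⟩ := List.mem_take_iff_getElem.1 hy
      exact decide_eq_true (hp (hl.getElem_le_getElem_of_le (by omega)) hpj)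
    have := (List.take_sublist (j + 1) l).countP_le (p := fun x => decide (p x))
    omega

theorem le_countP_iff_kthSmallest {m : Multiset ℝ} {p : ℝ → Prop} [DecidablePred p]
    (hp : IsLowerSet {x | p x}) {k : ℕ} (hk₀ : 1 ≤ k) (hk : k ≤ Multiset.card m) :
    k ≤ m.countP p ↔ p (kthSmallest m k) := by
  have hlen : k - 1 < (m.sort (· ≤ ·)).length := by rw [Multiset.length_sort]; omega
  have hsorted : (m.sort (· ≤ ·)).SortedLE :=
    List.sortedLE_iff_pairwise.2 (Multiset.pairwise_sort _ _)
  conv_lhs => rw [← Multiset.sort_eq m (· ≤ ·), Multiset.coe_countP]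
  rw [kthSmallest, List.getD_eq_getElem _ _ hlen, ← hsorted.lt_countP_iff hp hlen]
  omega

theorem le_kthSmallest_iff {m : Multiset ℝ} {k : ℕ} (hk₀ : 1 ≤ k) (hk : k ≤ Multiset.card m)
    {x : ℝ} : x ≤ kthSmallest m k ↔ m.countP (· < x) < k := by
  rw [← not_lt, ← le_countP_iff_kthSmallest (p := (· < x)) (isLowerSet_Iio x) hk₀ hk, not_le]

theorem le_kthSmallest_cons_iff {m : Multiset ℝ} {k : ℕ} (hk₀ : 1 ≤ k)
    (hk : k ≤ Multiset.card m) {x : ℝ} :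
    x ≤ kthSmallest (x ::ₘ m) k ↔ x ≤ kthSmallest m k := by
  rw [le_kthSmallest_iff hk₀ (by simp; omega), le_kthSmallest_iff hk₀ hk,
    Multiset.countP_cons_of_neg (p := (· < x)) _ (lt_irrefl x)]

section OrderStatisticsOfVectors

variable {ι : Type*} [Fintype ι] {k : ℕ}

theorem le_card_le_kthSmallest (f : ι → ℝ) (hk : k ≤ Fintype.card ι) :
    k ≤ #{i | f i ≤ kthSmallest (univ.val.map f) k} := by
  rcases Nat.eq_zero_or_pos k with rfl | hk₀
  · exact Nat.zero_le _
  have := (le_countP_iff_kthSmallest (m := univ.val.map f) (isLowerSet_Iic _) hk₀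
    (by simpa using hk)).2 le_rfl
  rwa [Multiset.countP_map] at this

theorem measurableSet_le_kthSmallest (i : ι) (hk₀ : 1 ≤ k) (hk : k ≤ Fintype.card ι) :
    MeasurableSet {f : ι → ℝ | f i ≤ kthSmallest (univ.val.map f) k} := by
  have hcount : Measurable fun f : ι → ℝ => #{j | f j < f i} := by
    simp_rw [card_filter]
    exact Finset.measurable_sum _ fun j _ => Measurable.ite
      (measurableSet_lt (measurable_pi_apply j) (measurable_pi_apply i))
      measurable_const measurable_const
  convert hcount (measurableSet_Iio (a := k)) using 1
  ext f
  rw [Set.mem_preimage, Set.mem_ofPred_eq, le_kthSmallest_iff hk₀ (by simpa using hk),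
    Multiset.countP_map]
  rfl

theorem kthSmallest_univ_comp_perm (f : ι → ℝ) (σ : Equiv.Perm ι) :
    kthSmallest (univ.val.map (f ∘ σ)) k = kthSmallest (univ.val.map f) k := by
  rw [← Multiset.map_map, Multiset.map_univ_val_equiv]

end OrderStatisticsOfVectors

open scoped Classical in
theorem mul_measure_univ_le_sum_measure {α ι : Type*} [MeasurableSpace α] (μ : Measure α)
    [Fintype ι] {A : ι → Set α} (hA : ∀ i, MeasurableSet (A i)) {k : ℕ}
    (hk : ∀ x, k ≤ #{i | x ∈ A i}) :
    k * μ Set.univ ≤ ∑ i, μ (A i) :=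
  calc k * μ Set.univ = ∫⁻ _, (k : ℝ≥0∞) ∂μ := (lintegral_const _).symm
    _ ≤ ∫⁻ x, ∑ i, (A i).indicator 1 x ∂μ := lintegral_mono fun x => by
      simp only [Set.indicator_apply, Pi.one_apply, Finset.sum_boole]
      exact_mod_cast hk x
    _ = ∑ i, μ (A i) := by
      rw [lintegral_finsetSum _ fun i _ => measurable_one.indicator (hA i)]
      exact Finset.sum_congr rfl fun i _ => lintegral_indicator_one (hA i)

theorem Fin.univ_val_map_eq_cons_last {n : ℕ} (f : Fin (n + 1) → ℝ) :
    univ.val.map f = f (Fin.last n) ::ₘ (univ : Finset (Fin n)).val.map fun i => f i.castSucc := by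
  rw [Fin.univ_castSuccEmb, Finset.cons_val, Multiset.map_cons, Finset.map_val, Multiset.map_map]
  rfl

theorem natCast_le_mul_measure_le_kthSmallest {Ω : Type*} [MeasurableSpace Ω] (μ : Measure Ω)
    [IsProbabilityMeasure μ] {n : ℕ} {S : Ω → Fin (n + 1) → ℝ} (hS : Measurable S)
    (hexch : ∀ σ : Equiv.Perm (Fin (n + 1)),
      Measure.map (fun ω => fun i => S ω (σ i)) μ = Measure.map S μ)
    {k : ℕ} (hkn : k ≤ n) :
    (k : ℝ≥0∞) ≤ (n + 1) * μ {ω | S ω (Fin.last n) ≤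
      kthSmallest ((univ : Finset (Fin n)).val.map fun i => S ω i.castSucc) k} := by
  rcases Nat.eq_zero_or_pos k with rfl | hk₀
  · simp
  set A : Fin (n + 1) → Set (Fin (n + 1) → ℝ) :=
    fun i => {f | f i ≤ kthSmallest (univ.val.map f) k}
  have hA : ∀ i, MeasurableSet (A i) := fun i =>
    measurableSet_le_kthSmallest i hk₀ (by simp; omega)
  have hA_eq : ∀ i, μ (S ⁻¹' A i) = μ (S ⁻¹' A (Fin.last n)) := by
    intro i
    have hswap :
        (fun ω j => S ω (Equiv.swap i (Fin.last n) j)) ⁻¹' A (Fin.last n) = S ⁻¹' A i := by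
      ext ω
      simp only [A, Set.mem_preimage, Set.mem_ofPred_eq, Equiv.swap_apply_right]
      rw [← kthSmallest_univ_comp_perm (S ω) (Equiv.swap i (Fin.last n))]
      rfl
    rw [← hswap, ← Measure.map_apply (by fun_prop) (hA _), hexch, Measure.map_apply hS (hA _)]
  calc (k : ℝ≥0∞) = k * μ Set.univ := by simp
    _ ≤ ∑ i, μ (S ⁻¹' A i) := mul_measure_univ_le_sum_measure μ (fun i => hS (hA i))
      fun ω => le_card_le_kthSmallest (S ω) (by rw [Fintype.card_fin]; omega)
    _ = (n + 1) * μ (S ⁻¹' A (Fin.last n)) := by simp [hA_eq]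
    _ ≤ _ := by
      gcongr
      intro ω hω
      rwa [Set.mem_preimage, Set.mem_ofPred_eq, Fin.univ_val_map_eq_cons_last,
        le_kthSmallest_cons_iff hk₀ (by simpa using hkn)] at hω

theorem split_conformal_coverage_stmt_9_general
    {Ω : Type*} [MeasurableSpace Ω] (μ : Measure Ω) [IsProbabilityMeasure μ]
    (n : ℕ) (S : Ω → (Fin (n + 1) → ℝ)) (hSmeas : Measurable S)
    (hexch : ∀ σ : Equiv.Perm (Fin (n + 1)),
      Measure.map (fun ω => fun i => S ω (σ i)) μ = Measure.map S μ)
    (α : ℝ)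
    (k : ℕ) (hk : k = ⌈(1 - α) * ((n : ℝ) + 1)⌉₊) (hkn : k ≤ n) :
    1 - α ≤
      (μ {ω | S ω (Fin.last n) ≤
        kthSmallest (((Finset.univ : Finset (Fin n)).val.map
          (fun i => S ω (Fin.castSucc i))) ) k}).toReal := by
  have hcover := ENNReal.toReal_mono (by finiteness)
    (natCast_le_mul_measure_le_kthSmallest μ hSmeas hexch hkn)
  rw [ENNReal.toReal_mul, ENNReal.toReal_add (by simp) (by simp), ENNReal.toReal_natCast,
    ENNReal.toReal_natCast, ENNReal.toReal_one] at hcover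
  have hceil : (1 - α) * ((n : ℝ) + 1) ≤ k := hk ▸ Nat.le_ceil _
  have hn : (0 : ℝ) < n + 1 := by positivity
  nlinarith

/-- Split conformal prediction: if `(S 0, …, S n)` is an exchangeable random vector,
`α ∈ (0,1)`, and `k = ⌈(1-α)(n+1)⌉ ≤ n`, then the test score `S (Fin.last n)` is at
most the `k`-th smallest calibration score with probability at least `1 - α`. -/
theorem split_conformal_coverage_stmt_9
    {Ω : Type*} [MeasurableSpace Ω] (μ : Measure Ω) [IsProbabilityMeasure μ]
    (n : ℕ) (S : Ω → (Fin (n + 1) → ℝ)) (hSmeas : Measurable S)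
    (hexch : ∀ σ : Equiv.Perm (Fin (n + 1)),
      Measure.map (fun ω => fun i => S ω (σ i)) μ = Measure.map S μ)
    (α : ℝ) (hα0 : 0 < α) (hα1 : α < 1)
    (k : ℕ) (hk : k = ⌈(1 - α) * ((n : ℝ) + 1)⌉₊) (hkn : k ≤ n) :
    1 - α ≤
      (μ {ω | S ω (Fin.last n) ≤
        kthSmallest (((Finset.univ : Finset (Fin n)).val.map
          (fun i => S ω (Fin.castSucc i))) ) k}).toReal :=
  split_conformal_coverage_stmt_9_general μ n S hSmeas hexch α k hk hkn
end

section
/- In the energy storage arbitrage linear program with round-trip losses (η < 1) and positive discharge cost, no optimal schedule charges and discharges simultaneously: if a feasible schedule (p, b, e) has p_τ > 0 and b_τ > 0 at some period τ, then there exists another feasible schedule (p', b', e') with the same state of charge trajectory e' = e and strictly larger objective value, obtained by decreasing p_τ by δ·η and b_τ by δ/η for δ = min(p_τ/η, b_τ·η) > 0. Consequently, every optimal schedule satisfies p_t · b_t = 0 for all t. -/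
open Finset

/-- Feasibility of a storage schedule `(p, b, e)` over horizon `T` with prices `lam`,
one-way efficiency `η`, power rating `P`, capacity `E`, and initial SoC `e 0 = e0`. -/
def Feasible (T : ℕ) (lam : ℕ → ℝ) (η P E e0 : ℝ) (p b e : ℕ → ℝ) : Prop :=
  e 0 = e0 ∧
  ∀ t, 1 ≤ t → t ≤ T →
    0 ≤ p t ∧ p t ≤ P ∧ 0 ≤ b t ∧ b t ≤ P ∧
    e t - e (t - 1) = -(p t) / η + b t * η ∧
    0 ≤ e t ∧ e t ≤ E ∧
    (lam t < 0 → p t = 0)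

/-- Arbitrage objective `J(p,b) = ∑_{t=1}^T (λ_t (p_t - b_t) - c p_t)`. -/
def arbObj (T : ℕ) (lam : ℕ → ℝ) (c : ℝ) (p b : ℕ → ℝ) : ℝ :=
  ∑ t ∈ Finset.Icc 1 T, (lam t * (p t - b t) - c * p t)

lemma improve_aux
    (T : ℕ) (lam : ℕ → ℝ) (η c P E e0 : ℝ)
    (hη0 : 0 < η) (hη1 : η < 1) (hc : 0 < c)
    (p b e : ℕ → ℝ) (hfe : Feasible T lam η P E e0 p b e)
    (τ : ℕ) (hτ1 : 1 ≤ τ) (hτT : τ ≤ T) (hp : 0 < p τ) (hb : 0 < b τ) :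
    0 < min (p τ / η) (b τ * η) ∧
    Feasible T lam η P E e0
      (Function.update p τ (p τ - min (p τ / η) (b τ * η) * η))
      (Function.update b τ (b τ - min (p τ / η) (b τ * η) / η)) e ∧
    arbObj T lam c p b <
      arbObj T lam c
        (Function.update p τ (p τ - min (p τ / η) (b τ * η) * η))
        (Function.update b τ (b τ - min (p τ / η) (b τ * η) / η)) := by
  obtain ⟨he0, hF⟩ := hfe
  obtain ⟨hp0, hpP, hb0, hbP, hdyn, heτ0, heτE, hlamz⟩ := hF τ hτ1 hτT
  set δ := min (p τ / η) (b τ * η) with hδ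
  have hδpos : 0 < δ := lt_min (div_pos hp hη0) (mul_pos hb hη0)
  have hlamτ : 0 ≤ lam τ := by
    by_contra h
    push_neg at h
    have := hlamz h
    linarith
  have hδ1 : δ * η ≤ p τ := by
    have h1 : δ ≤ p τ / η := min_le_left _ _
    calc δ * η ≤ (p τ / η) * η := by nlinarith
      _ = p τ := by field_simp
  have hδ2 : δ / η ≤ b τ := by
    have h2 : δ ≤ b τ * η := min_le_right _ _
    rw [div_le_iff₀ hη0]
    nlinarith
  have hdη : δ * η ≤ δ / η := by
    rw [le_div_iff₀ hη0]
    nlinarith [mul_pos hδpos hη0, mul_nonneg (mul_pos hδpos hη0).le (sub_nonneg.2 hη1.le)]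
  have hkey : lam τ * (p τ - b τ) - c * p τ <
      lam τ * ((p τ - δ * η) - (b τ - δ / η)) - c * (p τ - δ * η) := by
    nlinarith [mul_nonneg hlamτ (sub_nonneg.2 hdη), mul_pos (mul_pos hc hδpos) hη0]
  refine ⟨hδpos, ⟨he0, ?_⟩, ?_⟩
  · intro t ht1 htT
    by_cases h : t = τ
    · subst h
      simp only [Function.update_self]
      refine ⟨by linarith, by nlinarith, by linarith, by nlinarith, ?_, heτ0, heτE,
        fun hneg => absurd hneg (not_lt.2 hlamτ)⟩
      have heq : -(p t - δ * η) / η + (b t - δ / η) * η = -(p t) / η + b t * η := by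
        field_simp
        ring
      rw [heq]
      exact hdyn
    · simpa [Function.update_of_ne h] using hF t ht1 htT
  · unfold arbObj
    apply Finset.sum_lt_sum
    · intro i hi
      by_cases h : i = τ
      · subst h
        simp only [Function.update_self]
        linarith
      · simp [Function.update_of_ne h]
    · exact ⟨τ, Finset.mem_Icc.2 ⟨hτ1, hτT⟩, by simp only [Function.update_self]; linarith⟩

/-- With round-trip losses (`η < 1`) and positive discharge cost, simultaneous
charging and discharging at some period `τ` can be strictly improved by decreasing
`p τ` by `δ·η` and `b τ` by `δ/η` with `δ = min (p τ / η) (b τ · η) > 0`, keeping the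
same SoC trajectory; consequently every optimal schedule has `p t · b t = 0`. -/
theorem storage_no_simultaneous_stmt_10
    (T : ℕ) (hT : 1 ≤ T) (lam : ℕ → ℝ) (η c P E e0 : ℝ)
    (hη0 : 0 < η) (hη1 : η < 1) (hc : 0 < c) (hP : 0 < P) (hE : 0 < E)
    (he00 : 0 ≤ e0) (he0E : e0 ≤ E) :
    (∀ p b e, Feasible T lam η P E e0 p b e →
      ∀ τ, 1 ≤ τ → τ ≤ T → 0 < p τ → 0 < b τ →
        0 < min (p τ / η) (b τ * η) ∧
        Feasible T lam η P E e0
          (Function.update p τ (p τ - min (p τ / η) (b τ * η) * η))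
          (Function.update b τ (b τ - min (p τ / η) (b τ * η) / η)) e ∧
        arbObj T lam c p b <
          arbObj T lam c
            (Function.update p τ (p τ - min (p τ / η) (b τ * η) * η))
            (Function.update b τ (b τ - min (p τ / η) (b τ * η) / η))) ∧
    (∀ p b e, Feasible T lam η P E e0 p b e →
      (∀ p' b' e', Feasible T lam η P E e0 p' b' e' →
        arbObj T lam c p' b' ≤ arbObj T lam c p b) →
      ∀ t, 1 ≤ t → t ≤ T → p t * b t = 0) := by
  constructor
  · intro p b e hfe τ hτ1 hτT hp hb
    exact improve_aux T lam η c P E e0 hη0 hη1 hc p b e hfe τ hτ1 hτT hp hb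
  · intro p b e hfe hopt t ht1 htT
    by_contra h
    obtain ⟨hp0, _, hb0, _⟩ := hfe.2 t ht1 htT
    have hpne : p t ≠ 0 := fun hz => h (by rw [hz, zero_mul])
    have hbne : b t ≠ 0 := fun hz => h (by rw [hz, mul_zero])
    have hp : 0 < p t := lt_of_le_of_ne hp0 (Ne.symm hpne)
    have hb : 0 < b t := lt_of_le_of_ne hb0 (Ne.symm hbne)
    obtain ⟨_, hfe', hlt⟩ := improve_aux T lam η c P E e0 hη0 hη1 hc p b e hfe t ht1 htT hp hb
    exact absurd (hopt _ _ _ hfe') (not_le.2 hlt)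
end
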